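/- arXiv:2601.05592 — 3 statements merged into one kernel-verified Lean document; each statement's English description precedes it below -/
import Mathlib

section
/- For all integers n ≥ 2, d_3(n) ≥ d_3(n−1), where d_3(m) is the number of partitions of m into distinct parts each at least 3, and d_3(0) = 1. -/
/-!
Adding one to a largest part of a partition of `n - 1` gives a partition of `n`. This keeps the
parts distinct and at least `3`, and it is injective, since the largest part of the image
determines which part was enlarged.
-/

open Finset PowerSeries

/-- `d3 m` : the number of partitions of `m` into distinct parts, all of size at least `3`.
In particular `d3 0 = 1` (the empty partition). -/
def d3 (m : ℕ) : ℕ :=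
  (Finset.univ.filter (fun p : m.Partition => p.parts.Nodup ∧ ∀ i ∈ p.parts, 3 ≤ i)).card

theorem Multiset.sup_mem_of_ne_zero {α : Type*} [LinearOrder α] [OrderBot α] {s : Multiset α}
    (hs : s ≠ 0) : s.sup ∈ s := by
  obtain ⟨a, ha, hmax⟩ := s.exists_max_image id hs
  rwa [le_antisymm (Multiset.sup_le.2 hmax) (Multiset.le_sup ha)]

namespace Nat.Partition

theorem parts_ne_zero {m : ℕ} (hm : m ≠ 0) (p : m.Partition) : p.parts ≠ 0 := by
  intro h
  apply hm
  rw [← p.parts_sum, h, Multiset.sum_zero]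

/-- For `m = 0` this is the partition `{1}` of `1`, since the `sup` of the empty multiset is `0`. -/
def succLargest {m : ℕ} (p : m.Partition) : (m + 1).Partition where
  parts := (p.parts.sup + 1) ::ₘ p.parts.erase p.parts.sup
  parts_pos {i} hi := by
    rcases Multiset.mem_cons.1 hi with rfl | hi
    · exact Nat.succ_pos _
    · exact p.parts_pos (Multiset.mem_of_mem_erase hi)
  parts_sum := by
    rcases eq_or_ne m 0 with rfl | hm
    · simp
    · rw [Multiset.sum_cons, add_right_comm,
        Multiset.sum_erase (Multiset.sup_mem_of_ne_zero (parts_ne_zero hm p)), p.parts_sum]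

variable {m : ℕ} (p : m.Partition)

@[simp]
theorem succLargest_parts :
    p.succLargest.parts = (p.parts.sup + 1) ::ₘ p.parts.erase p.parts.sup :=
  rfl

theorem le_sup_of_mem_erase_sup {i : ℕ} (hi : i ∈ p.parts.erase p.parts.sup) : i ≤ p.parts.sup :=
  Multiset.le_sup (Multiset.mem_of_mem_erase hi)

theorem sup_succLargest_parts : p.succLargest.parts.sup = p.parts.sup + 1 := by
  rw [succLargest_parts, Multiset.sup_cons, sup_eq_left]
  exact Multiset.sup_le.2 fun i hi => (p.le_sup_of_mem_erase_sup hi).trans (Nat.le_succ _)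

theorem succLargest_injective : Function.Injective (succLargest (m := m)) := by
  intro p q h
  rcases eq_or_ne m 0 with rfl | hm
  · exact Subsingleton.elim p q
  have hsup : p.parts.sup = q.parts.sup := by
    simpa only [sup_succLargest_parts, add_left_inj] using congrArg (·.parts.sup) h
  ext1
  rw [← Multiset.cons_erase (Multiset.sup_mem_of_ne_zero (parts_ne_zero hm p)),
    ← Multiset.cons_erase (Multiset.sup_mem_of_ne_zero (parts_ne_zero hm q))]
  simpa [hsup] using congrArg Nat.Partition.parts h

theorem succLargest_parts_nodup (hp : p.parts.Nodup) : p.succLargest.parts.Nodup := by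
  rw [succLargest_parts, Multiset.nodup_cons]
  exact ⟨fun hi => (p.le_sup_of_mem_erase_sup hi).not_gt (Nat.lt_succ_self _), hp.erase _⟩

theorem le_of_mem_succLargest_parts {k : ℕ} (hm : m ≠ 0) (hp : ∀ i ∈ p.parts, k ≤ i) :
    ∀ i ∈ p.succLargest.parts, k ≤ i := by
  intro i hi
  rcases Multiset.mem_cons.1 hi with rfl | hi
  · exact (hp _ (Multiset.sup_mem_of_ne_zero (parts_ne_zero hm p))).trans (Nat.le_succ _)
  · exact hp i (Multiset.mem_of_mem_erase hi)

end Nat.Partition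

theorem d3_le_d3_succ {m : ℕ} (hm : m ≠ 0) : d3 m ≤ d3 (m + 1) := by
  refine Finset.card_le_card_of_injOn Nat.Partition.succLargest (fun p hp => ?_)
    Nat.Partition.succLargest_injective.injOn
  simp only [Finset.coe_filter, Finset.mem_univ, true_and, Set.mem_ofPred_eq] at hp ⊢
  exact ⟨p.succLargest_parts_nodup hp.1, p.le_of_mem_succLargest_parts hm hp.2⟩

theorem stmt5 : ∀ n : ℕ, 2 ≤ n → d3 (n - 1) ≤ d3 n := by
  intro n hn
  obtain ⟨m, rfl⟩ : ∃ m, n = m + 1 := ⟨n - 1, by omega⟩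
  exact d3_le_d3_succ (by omega)
end

section
/- The generating function identity B_{2,2}(q) = (1/(q;q²)_∞) · ( q² + q³/(1−q²) + q⁶/(1−q⁴) ) holds as formal power series, where B_{2,2}(q) = ∑_{n≥0} b_{2,2}(n) qⁿ. -/
open Finset PowerSeries

/-- The list of hook lengths of the Young diagram of a partition whose row
lengths (in nonincreasing order) are given by the list `l`.  The box in row `i`,
column `j` (both 0-indexed) has hook length `(l_i - j) + #{i' > i : j < l_{i'}}`. -/
def hookCount (l : List ℕ) (k : ℕ) : ℕ :=
  ((Finset.range l.length ×ˢ Finset.range (l.getD 0 0)).filter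
    (fun p => p.2 < l.getD p.1 0 ∧
      (l.getD p.1 0 - p.2) +
        ((List.range l.length).filter (fun i' => p.1 < i' ∧ p.2 < l.getD i' 0)).length = k)).card

/-- `b t k n` : the total number of boxes with hook length `k` among the Young
diagrams of all `t`-regular partitions of `n`. -/
def b (t k n : ℕ) : ℕ :=
  ∑ p ∈ Finset.univ.filter (fun p : n.Partition => ∀ i ∈ p.parts, ¬ t ∣ i),
    hookCount ((p.parts.sort (· ≤ ·)).reverse) k

/-!
In a partition into odd parts, a box of hook length 2 has arm 1 and leg 0 or arm 0 and leg 1.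
Since consecutive distinct part sizes differ by at least 2, the first kind is the next-to-last box
of the lowest row of length `v`, for each part size `v ≥ 3`, and the second kind is the last box
of the second-lowest row of length `v`, for each part size `v` occurring at least twice. Deleting
one, resp. two, parts `v` is a bijection onto the odd partitions of `n - v`, resp. `n - 2v`, so
with `p_odd(m)` the number of odd partitions of `m`,
`b(n) = ∑_{v odd, v ≥ 3} p_odd(n - v) + ∑_{v odd} p_odd(n - 2v)`. This is the coefficient of
`qⁿ` in `1/(q;q²)_∞` times `q³/(1 - q²) = ∑_{v odd, v ≥ 3} q^v` plus
`q² + q⁶/(1 - q⁴) = ∑_{v odd} q^{2v}`, and in degrees at most `2n + 2` the truncated product in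
the statement agrees with `1/(q;q²)_∞`.
-/

def legLength (l : List ℕ) (i j : ℕ) : ℕ :=
  ((List.range l.length).filter (fun i' => i < i' ∧ j < l.getD i' 0)).length

theorem List.length_filter_range_getD (l : List ℕ) (p : ℕ → Bool) :
    ((List.range l.length).filter (fun i => p (l.getD i 0))).length = l.countP p := by
  induction l with
  | nil => rfl
  | cons x xs ih =>
    rw [List.length_cons, List.range_succ_eq_map, List.filter_cons, List.filter_map,
      List.countP_cons, ← ih]
    by_cases h : p x <;> simp [h, Function.comp_def]

theorem legLength_cons_zero (x : ℕ) (xs : List ℕ) (j : ℕ) :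
    legLength (x :: xs) 0 j = xs.countP (j < ·) := by
  rw [legLength, List.length_cons, List.range_succ_eq_map, List.filter_cons, List.filter_map,
    ← List.length_filter_range_getD]
  simp [Function.comp_def]

theorem legLength_cons_succ (x : ℕ) (xs : List ℕ) (i j : ℕ) :
    legLength (x :: xs) (i + 1) j = legLength xs i j := by
  rw [legLength, legLength, List.length_cons, List.range_succ_eq_map, List.filter_cons,
    List.filter_map]
  simp [Function.comp_def]

theorem List.Pairwise.getD_le_getD_zero {l : List ℕ} (hl : l.Pairwise (· ≥ ·)) (i : ℕ) :
    l.getD i 0 ≤ l.getD 0 0 := by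
  rcases l with _ | ⟨x, xs⟩
  · rfl
  rcases i with _ | i
  · rfl
  rw [List.getD_cons_succ, List.getD_cons_zero]
  rcases lt_or_ge i xs.length with h | h
  · rw [List.getD_eq_getElem _ _ h]
    exact (List.pairwise_cons.1 hl).1 _ (List.getElem_mem h)
  · rw [List.getD_eq_default _ _ h]
    exact Nat.zero_le x

theorem hookCount_eq_sum_rows {l : List ℕ} (hl : l.Pairwise (· ≥ ·)) (k : ℕ) :
    hookCount l k = ∑ i ∈ range l.length,
      #{j ∈ range (l.getD i 0) | l.getD i 0 - j + legLength l i j = k} := by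
  rw [hookCount, card_filter, sum_product]
  refine sum_congr rfl fun i _ => ?_
  rw [card_filter, ← sum_range_add_sum_Ico _ (hl.getD_le_getD_zero i),
    sum_eq_zero (s := Ico _ _) fun j hj => if_neg fun h => (mem_Ico.1 hj).1.not_gt h.1, add_zero]
  refine sum_congr rfl fun j hj => ?_
  simp only [mem_range.1 hj, true_and]
  rfl

theorem hookCount_cons {x : ℕ} {xs : List ℕ} (hl : (x :: xs).Pairwise (· ≥ ·)) (k : ℕ) :
    hookCount (x :: xs) k = hookCount xs k + #{j ∈ range x | x - j + xs.countP (j < ·) = k} := by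
  rw [hookCount_eq_sum_rows hl, hookCount_eq_sum_rows (List.pairwise_cons.1 hl).2, List.length_cons,
    sum_range_succ']
  simp only [List.getD_cons_succ, List.getD_cons_zero, legLength_cons_succ, legLength_cons_zero]

theorem List.countP_lt_eq_count_of_odd {x j : ℕ} {xs : List ℕ} (hx : Odd x)
    (hxs : ∀ y ∈ xs, Odd y ∧ y ≤ x) (hj : x ≤ j + 2) (hjx : j < x) :
    xs.countP (j < ·) = xs.count x := by
  rw [List.count_eq_countP]
  refine List.countP_congr fun y hy => ?_
  obtain ⟨⟨b, rfl⟩, hyx⟩ := hxs y hy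
  obtain ⟨a, rfl⟩ := hx
  simp only [decide_eq_true_eq, beq_iff_eq]
  omega

theorem card_hooks_two_first_row {x : ℕ} {xs : List ℕ} (hx : Odd x)
    (hxs : ∀ y ∈ xs, Odd y ∧ y ≤ x) :
    #{j ∈ range x | x - j + xs.countP (j < ·) = 2} =
      (if 3 ≤ x ∧ xs.count x = 0 then 1 else 0) + if xs.count x = 1 then 1 else 0 := by
  have hleg := fun j => List.countP_lt_eq_count_of_odd (j := j) hx hxs
  rw [card_filter]
  obtain ⟨_ | m, rfl⟩ := hx
  · simp only [Nat.mul_zero, Nat.zero_add] at hleg ⊢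
    rw [sum_range_one, hleg 0 (by omega) (by omega)]
    split_ifs <;> omega
  rw [sum_eq_add_of_mem (2 * m + 1) (2 * m + 2) (mem_range.2 (by omega)) (mem_range.2 (by omega))
      (by omega) fun j hj hne => if_neg (by rw [mem_range] at hj; omega),
    hleg _ (by omega) (by omega), hleg _ (by omega) (by omega)]
  split_ifs <;> omega

def hookTwoWeight (v c : ℕ) : ℕ :=
  (if 3 ≤ v ∧ 1 ≤ c then 1 else 0) + if 2 ≤ c then 1 else 0

theorem hookTwoWeight_count_cons (x v : ℕ) (xs : List ℕ) :
    hookTwoWeight v ((x :: xs).count v) = hookTwoWeight v (xs.count v) +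
      if v = x then (if 3 ≤ x ∧ xs.count x = 0 then 1 else 0) + if xs.count x = 1 then 1 else 0
      else 0 := by
  rw [List.count_cons]
  by_cases h : v = x
  · subst h
    simp only [beq_self_eq_true, if_true, hookTwoWeight]
    split_ifs <;> omega
  · simp [h, Ne.symm h]

theorem hookCount_two_of_odd {l : List ℕ} (hl : l.Pairwise (· ≥ ·)) (hodd : ∀ x ∈ l, Odd x)
    {V : Finset ℕ} (hV : ∀ x ∈ l, x ∈ V) :
    hookCount l 2 = ∑ v ∈ V, hookTwoWeight v (l.count v) := by
  induction l with
  | nil => simp [hookCount, hookTwoWeight]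
  | cons x xs ih =>
    obtain ⟨hx_ge, hxs⟩ := List.pairwise_cons.1 hl
    rw [hookCount_cons hl, card_hooks_two_first_row (hodd x (by simp))
        fun y hy => ⟨hodd y (by simp [hy]), hx_ge y hy⟩,
      ih hxs (fun y hy => hodd y (by simp [hy])) (fun y hy => hV y (by simp [hy]))]
    simp only [hookTwoWeight_count_cons, sum_add_distrib, sum_ite_eq', if_pos (hV x (by simp))]

namespace Nat.Partition

theorem mul_le_of_le_count {n k v : ℕ} {p : n.Partition} (h : k ≤ p.parts.count v) :
    k * v ≤ n := by
  rw [← p.parts_sum, ← tsub_add_cancel_of_le (Multiset.le_count_iff_replicate_le.1 h),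
    Multiset.sum_add, Multiset.sum_replicate, smul_eq_mul]
  exact Nat.le_add_left _ _

def partitionWithPartsEquiv {m k v : ℕ} (hv : 0 < v) :
    {p : (m + k * v).Partition // k ≤ p.parts.count v} ≃ m.Partition where
  toFun p := by
    refine ⟨p.1.parts - .replicate k v,
      fun hi => p.1.parts_pos (Multiset.mem_of_le tsub_le_self hi), ?_⟩
    have h := congrArg Multiset.sum
      (tsub_add_cancel_of_le (Multiset.le_count_iff_replicate_le.1 p.2))
    rw [Multiset.sum_add, Multiset.sum_replicate, smul_eq_mul, p.1.parts_sum] at h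
    omega
  invFun q := ⟨⟨q.parts + .replicate k v, by
      intro i hi
      rcases Multiset.mem_add.1 hi with hi | hi
      · exact q.parts_pos hi
      · rw [Multiset.eq_of_mem_replicate hi]; exact hv, by
      rw [Multiset.sum_add, Multiset.sum_replicate, smul_eq_mul, q.parts_sum]⟩, by simp⟩
  left_inv p := Subtype.ext <| Partition.ext <|
    tsub_add_cancel_of_le (Multiset.le_count_iff_replicate_le.1 p.2)
  right_inv q := Partition.ext <| add_tsub_cancel_right _ _

theorem card_restricted_filter_le_count {P : ℕ → Prop} [DecidablePred P] {v : ℕ} (hv : P v)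
    (hv0 : 0 < v) (m k : ℕ) :
    #{p ∈ restricted (m + k * v) P | k ≤ p.parts.count v} = #(restricted m P) := by
  let e := partitionWithPartsEquiv (m := m) (k := k) hv0
  refine card_bij' (fun p hp => e ⟨p, (mem_filter.1 hp).2⟩) (fun q _ => (e.symm q).1) ?_ ?_
    (fun p _ => congrArg Subtype.val (e.symm_apply_apply _)) (fun q _ => e.apply_symm_apply q)
  · intro p hp
    simp only [restricted, mem_filter, mem_univ, true_and] at hp ⊢
    exact fun i hi => hp.1 i (Multiset.mem_of_le tsub_le_self hi)
  · intro q hq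
    simp only [restricted, mem_filter, mem_univ, true_and] at hq ⊢
    refine ⟨fun i hi => ?_, (e.symm q).2⟩
    rcases Multiset.mem_add.1 hi with hi | hi
    · exact hq i hi
    · rwa [Multiset.eq_of_mem_replicate hi]

theorem card_odds_filter_le_count (n v : ℕ) {k : ℕ} (hk : k ≠ 0) :
    #{p ∈ odds n | k ≤ p.parts.count v} =
      if Odd v ∧ k * v ≤ n then #(odds (n - k * v)) else 0 := by
  split_ifs with h
  · obtain ⟨m, rfl⟩ : ∃ m, n = m + k * v := ⟨n - k * v, by omega⟩
    rw [Nat.add_sub_cancel]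
    exact card_restricted_filter_le_count (Nat.not_even_iff_odd.2 h.1) h.1.pos m k
  · refine Finset.card_eq_zero.2 <| filter_eq_empty_iff.2 fun p hp hkp =>
      h ⟨?_, mul_le_of_le_count hkp⟩
    have hv : v ∈ p.parts := Multiset.count_pos.1 (by omega)
    exact Nat.not_even_iff_odd.1 ((mem_filter.1 hp).2 v hv)

end Nat.Partition

theorem hookCount_two_of_mem_odds {n : ℕ} {p : n.Partition} (hp : p ∈ Nat.Partition.odds n) :
    hookCount ((p.parts.sort (· ≤ ·)).reverse) 2 =
      ∑ v ∈ range (n + 1), hookTwoWeight v (p.parts.count v) := by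
  have hmem : ∀ x, x ∈ (p.parts.sort (· ≤ ·)).reverse ↔ x ∈ p.parts := fun x => by
    rw [List.mem_reverse, Multiset.mem_sort]
  rw [hookCount_two_of_odd (List.pairwise_reverse.2 (Multiset.pairwise_sort _ _))
    (fun x hx => Nat.not_even_iff_odd.1 ((mem_filter.1 hp).2 x ((hmem x).1 hx)))
    (fun x hx => mem_range.2 (Nat.lt_succ_of_le (Nat.Partition.le_of_mem_parts ((hmem x).1 hx))))]
  refine sum_congr rfl fun v _ => ?_
  rw [List.count_reverse, ← Multiset.coe_count, Multiset.sort_eq]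

theorem b_two_two_eq_sum_parts (n : ℕ) : b 2 2 n = ∑ v ∈ range (n + 1),
    ((if Odd v ∧ 3 ≤ v then #(Nat.Partition.odds (n - v)) else 0) +
      if Odd v ∧ 2 * v ≤ n then #(Nat.Partition.odds (n - 2 * v)) else 0) := by
  have hodds :
      univ.filter (fun p : n.Partition => ∀ i ∈ p.parts, ¬ 2 ∣ i) = Nat.Partition.odds n := by
    simp [Nat.Partition.odds, Nat.Partition.restricted, even_iff_two_dvd]
  rw [b, hodds, sum_congr rfl fun p hp => hookCount_two_of_mem_odds hp, sum_comm]
  refine sum_congr rfl fun v hv => ?_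
  simp only [hookTwoWeight, sum_add_distrib, sum_boole, Nat.cast_id]
  rw [Nat.Partition.card_odds_filter_le_count n v two_ne_zero]
  congr 1
  by_cases h3 : 3 ≤ v
  · simp only [h3, true_and]
    rw [Nat.Partition.card_odds_filter_le_count n v one_ne_zero, one_mul]
    simp only [mem_range_succ_iff.1 hv, and_true]
  · simp [h3]

theorem Finset.sum_range_ite_odd_two_mul {M : Type*} [AddCommMonoid M] (n : ℕ) (f : ℕ → M) :
    (∑ v ∈ range (n + 1), if Odd v ∧ 2 * v ≤ n then f (n - 2 * v) else 0) =
      ∑ j ∈ range (n + 1), if j % 4 = 2 then f (n - j) else 0 := by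
  rw [← sum_filter, ← sum_filter]
  refine sum_nbij' (2 * ·) (· / 2) ?_ ?_ (fun v _ => by omega) ?_ (fun _ _ => rfl)
  all_goals
    intro v hv
    simp only [mem_filter, mem_range, Nat.odd_iff] at hv ⊢
    omega

theorem b_two_two_eq_convolution (n : ℕ) :
    b 2 2 n = ∑ j ∈ range (n + 1), #(Nat.Partition.odds (n - j)) *
      ((if Odd j ∧ 3 ≤ j then 1 else 0) + if j % 4 = 2 then 1 else 0) := by
  rw [b_two_two_eq_sum_parts, sum_add_distrib,
    sum_range_ite_odd_two_mul n fun m => #(Nat.Partition.odds m), ← sum_add_distrib]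
  simp only [mul_add, mul_ite, mul_one, mul_zero]

section

open scoped PowerSeries.WithPiTopology

theorem PowerSeries.coeff_eq_coeff_prod_of_hasProd {R ι : Type*} [CommRing R]
    [TopologicalSpace R] [T2Space R] {f : ι → R⟦X⟧} {g : R⟦X⟧} (hf : HasProd f g)
    (s : Finset ι) {d : ℕ} (hs : ∀ i ∉ s, X ^ (d + 1) ∣ f i - 1) :
    coeff d g = coeff d (∏ i ∈ s, f i) := by
  classical
  have hlim := ((WithPiTopology.continuous_coeff R d).tendsto g).comp hf
  refine tendsto_nhds_unique hlim (tendsto_const_nhds.congr' ?_)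
  filter_upwards [Filter.eventually_ge_atTop s] with t hst
  have htail : X ^ (d + 1) ∣ ∏ i ∈ t \ s, f i - 1 := by
    rw [← Ideal.mem_span_singleton, ← Ideal.Quotient.eq, map_prod, map_one]
    refine prod_eq_one fun i hi => ?_
    rw [← map_one (Ideal.Quotient.mk _), Ideal.Quotient.eq, Ideal.mem_span_singleton]
    exact hs i (mem_sdiff.1 hi).2
  have hdvd : X ^ (d + 1) ∣ ∏ i ∈ t, f i - ∏ i ∈ s, f i := by
    rw [← prod_sdiff hst, ← sub_one_mul]
    exact htail.mul_right _
  rw [Function.comp_apply, eq_comm, ← sub_eq_zero, ← map_sub]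
  exact X_pow_dvd_iff.1 hdvd d (Nat.lt_succ_self d)

theorem PowerSeries.WithPiTopology.tsum_pow_eq_inv_one_sub {K : Type*} [Field K]
    [TopologicalSpace K] [IsTopologicalRing K] [T2Space K] {φ : K⟦X⟧}
    (hφ : constantCoeff φ = 0) : ∑' j, φ ^ j = (1 - φ)⁻¹ :=
  (eq_inv_iff_mul_eq_one (by simp [hφ])).2 (tsum_pow_mul_one_sub_of_constantCoeff_eq_zero hφ)

theorem PowerSeries.inv_one_sub_sub_one {K : Type*} [Field K] {φ : K⟦X⟧}
    (hφ : constantCoeff φ = 0) : (1 - φ)⁻¹ - 1 = φ * (1 - φ)⁻¹ := by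
  have h : (1 - φ) * (1 - φ)⁻¹ = 1 := PowerSeries.mul_inv_cancel _ (by simp [hφ])
  linear_combination h

theorem coeff_prod_inv_one_sub_X_pow_odd {K : Type*} [Field K] {N k : ℕ} (hk : k ≤ 2 * N) :
    coeff k (∏ m ∈ range N, (1 - X ^ (2 * m + 1) : K⟦X⟧)⁻¹) = #(Nat.Partition.odds k) := by
  -- Any topology on `K` lets us read coefficients off Mathlib's infinite product; take `⊥`.
  let _ : TopologicalSpace K := ⊥
  have _ : DiscreteTopology K := ⟨rfl⟩
  have h := Nat.Partition.hasProd_powerSeriesMk_card_restricted K (¬ Even ·)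
  simp only [pow_mul] at h
  simp (disch := simp) only [WithPiTopology.tsum_pow_eq_inv_one_sub] at h
  have hodd (m : ℕ) : ¬ Even (2 * m + 1) := Nat.not_even_iff_odd.2 (odd_two_mul_add_one m)
  refine Eq.symm ?_
  convert coeff_eq_coeff_prod_of_hasProd h ((range N).image (2 * ·)) (d := k) ?_ using 1
  · rw [coeff_mk]; rfl
  · rw [prod_image fun a _ b _ hab => by simpa using hab]
    simp only [hodd, not_false_eq_true, if_true]
  intro i hi
  split_ifs with hi1
  · rw [sub_self]
    exact dvd_zero _
  · obtain ⟨m, rfl⟩ : ∃ m, i = 2 * m := ⟨i / 2, by grind⟩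
    have hm : N ≤ m := not_lt.1 fun hm => hi (mem_image.2 ⟨m, mem_range.2 hm, rfl⟩)
    rw [inv_one_sub_sub_one (by simp)]
    exact (pow_dvd_pow X (by omega)).mul_right _

theorem PowerSeries.coeff_inv_one_sub_X_pow {K : Type*} [Field K] {m : ℕ}
    (hm : m ≠ 0) (j : ℕ) : coeff j (1 - X ^ m : K⟦X⟧)⁻¹ = if m ∣ j then 1 else 0 := by
  suffices h : (1 - X ^ m : K⟦X⟧)⁻¹ = mk fun j => if m ∣ j then 1 else 0 by rw [h, coeff_mk]
  rw [eq_comm, eq_inv_iff_mul_eq_one (by simp [hm])]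
  ext j
  rw [mul_sub, mul_one, map_sub, coeff_mul_X_pow', coeff_mk, coeff_mk, coeff_one]
  rcases lt_or_ge j m with hj | hj
  · have : m ∣ j ↔ j = 0 := ⟨fun h => Nat.eq_zero_of_dvd_of_lt h hj, fun h => h ▸ dvd_zero m⟩
    rw [if_neg hj.not_ge, sub_zero]
    exact if_congr this rfl rfl
  · rw [if_pos hj, if_neg (show j ≠ 0 by omega)]
    simp only [Nat.dvd_sub_iff_left hj dvd_rfl, sub_self]

theorem coeff_hookTwoFactor {K : Type*} [Field K] (j : ℕ) :
    coeff j (X ^ 2 + X ^ 3 * (1 - X ^ 2)⁻¹ + X ^ 6 * (1 - X ^ 4)⁻¹ : K⟦X⟧) =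
      (if Odd j ∧ 3 ≤ j then 1 else 0) + if j % 4 = 2 then 1 else 0 := by
  rw [map_add, map_add, coeff_X_pow, coeff_X_pow_mul', coeff_X_pow_mul',
    coeff_inv_one_sub_X_pow two_ne_zero, coeff_inv_one_sub_X_pow four_ne_zero]
  simp only [Nat.odd_iff]
  split_ifs <;> first | omega | norm_num

end

theorem stmt7 : ∀ n : ℕ,
    (PowerSeries.coeff (R := ℚ) n) (PowerSeries.mk fun m => (b 2 2 m : ℚ)) =
      (PowerSeries.coeff (R := ℚ) n)
        ((∏ m ∈ Finset.range (n + 1), (1 - (X : ℚ⟦X⟧) ^ (2 * m + 1))⁻¹) *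
          (X ^ 2 + X ^ 3 * (1 - X ^ 2)⁻¹ + X ^ 6 * (1 - X ^ 4)⁻¹)) := by
  intro n
  rw [coeff_mk, b_two_two_eq_convolution, coeff_mul, ← Finset.Nat.sum_antidiagonal_swap]
  simp only [Prod.fst_swap, Prod.snd_swap]
  rw [Finset.Nat.sum_antidiagonal_eq_sum_range_succ (fun j i => coeff i _ * coeff j _)]
  push_cast
  refine sum_congr rfl fun j hj => ?_
  rw [coeff_prod_inv_one_sub_X_pow_odd (by omega), coeff_hookTwoFactor]
end

section
/- For every n ≥ 4, the coefficient of qⁿ in ∏_{m≥3}(1+q^m) · (q² + 3q⁴ + q⁶ − q³) is nonnegative. -/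
/-! The coefficient of `qⁿ` is `d(n-2) - d(n-3) + 3 d(n-4) + d(n-6)`, where `d(k)` counts the
partitions of `k` into distinct parts `≥ 3` (terms with negative index vanish; truncating the product
at parts `≤ n + 3` does not affect them), so it suffices that
`d(n-3) ≤ d(n-2)`. For this, raising the largest part of a partition of `k ≥ 1` by one is an
injection from the partitions of `k` into those of `k + 1`. -/

open Finset PowerSeries

theorem PowerSeries.coeff_prod_one_add_X_pow {ι R : Type*} [CommSemiring R] (s : Finset ι)
    (f : ι → ℕ) (k : ℕ) :
    coeff k (∏ i ∈ s, (1 + (X : R⟦X⟧) ^ f i)) = (#{t ∈ s.powerset | ∑ i ∈ t, f i = k} : R) := by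
  simp only [prod_one_add, prod_pow_eq_pow_sum, map_sum, coeff_X_pow, sum_boole, eq_comm]

namespace Finset

lemma Nonempty.sup_id_mem {α : Type*} [LinearOrder α] [OrderBot α] {s : Finset α}
    (hs : s.Nonempty) : s.sup id ∈ s := by
  simpa using sup_mem_of_nonempty (f := id) hs

def bumpMax (t : Finset ℕ) : Finset ℕ := insert (t.sup id + 1) (t.erase (t.sup id))

def unbumpMax (t : Finset ℕ) : Finset ℕ := insert (t.sup id - 1) (t.erase (t.sup id))

variable {t : Finset ℕ}

lemma sup_id_add_one_notMem_erase_sup_id (t : Finset ℕ) : t.sup id + 1 ∉ t.erase (t.sup id) :=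
  fun h => Nat.not_succ_le_self _ (le_sup (f := id) (mem_of_mem_erase h))

lemma sup_id_bumpMax (t : Finset ℕ) : (bumpMax t).sup id = t.sup id + 1 := by
  have : (t.erase (t.sup id)).sup id ≤ t.sup id := sup_mono (erase_subset _ _)
  simp only [bumpMax, sup_insert, id]
  omega

lemma unbumpMax_bumpMax (ht : t.Nonempty) : unbumpMax (bumpMax t) = t := by
  rw [unbumpMax, sup_id_bumpMax, Nat.add_sub_cancel, bumpMax,
    erase_insert (sup_id_add_one_notMem_erase_sup_id t), insert_erase ht.sup_id_mem]

lemma sum_bumpMax_add (ht : t.Nonempty) (g : ℕ → ℕ) :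
    ∑ i ∈ bumpMax t, g i + g (t.sup id) = ∑ i ∈ t, g i + g (t.sup id + 1) := by
  rw [bumpMax, sum_insert (sup_id_add_one_notMem_erase_sup_id t), add_assoc,
    sum_erase_add _ _ ht.sup_id_mem, add_comm]

lemma card_filter_sum_add_eq_le_succ {N c k : ℕ} (hk : k ≠ 0) (hkN : k + 1 < N + c) :
    #{t ∈ (range N).powerset | ∑ m ∈ t, (m + c) = k} ≤
      #{t ∈ (range N).powerset | ∑ m ∈ t, (m + c) = k + 1} := by
  have nonempty {t : Finset ℕ} (ht : ∑ m ∈ t, (m + c) = k) : t.Nonempty :=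
    nonempty_iff_ne_empty.2 fun h => hk (by simp [← ht, h])
  refine card_le_card_of_injOn bumpMax (fun t ht => ?_) (Set.LeftInvOn.injOn (f₁' := unbumpMax)
    fun t ht => unbumpMax_bumpMax (nonempty (mem_filter.1 ht).2))
  simp only [coe_filter, mem_powerset, Set.mem_ofPred_eq] at ht ⊢
  obtain ⟨hsub, hsum⟩ := ht
  have hmax : t.sup id + c ≤ k :=
    hsum ▸ single_le_sum (f := (· + c)) (fun _ _ => Nat.zero_le _) (nonempty hsum).sup_id_mem
  have hbump := sum_bumpMax_add (nonempty hsum) (· + c)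
  refine ⟨insert_subset (mem_range.2 (by omega)) ((erase_subset _ _).trans hsub), ?_⟩
  omega

end Finset

theorem stmt16 : ∀ n : ℕ, 4 ≤ n →
    0 ≤ (PowerSeries.coeff (R := ℤ) n)
        ((∏ m ∈ Finset.range (n + 1), (1 + (X : ℤ⟦X⟧) ^ (m + 3))) *
          (X ^ 2 + 3 * X ^ 4 + X ^ 6 - X ^ 3)) := by
  intro n hn
  set P := ∏ m ∈ Finset.range (n + 1), (1 + (X : ℤ⟦X⟧) ^ (m + 3))
  have hnonneg (k : ℕ) : 0 ≤ coeff k P := by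
    rw [coeff_prod_one_add_X_pow]
    exact Nat.cast_nonneg _
  have hmono : coeff (n - 3) P ≤ coeff (n - 2) P := by
    rw [coeff_prod_one_add_X_pow, coeff_prod_one_add_X_pow, show n - 2 = n - 3 + 1 by omega]
    exact_mod_cast card_filter_sum_add_eq_le_succ (by omega) (by omega)
  rw [show P * (X ^ 2 + 3 * X ^ 4 + X ^ 6 - X ^ 3) =
      P * X ^ 2 + 3 • (P * X ^ 4) + P * X ^ 6 - P * X ^ 3 by ring]
  simp only [map_sub, map_add, map_nsmul, coeff_mul_X_pow', if_pos (by omega : 2 ≤ n),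
    if_pos (by omega : 3 ≤ n), if_pos hn]
  rw [nsmul_eq_mul, Nat.cast_ofNat]
  split_ifs <;> linarith [hnonneg (n - 4), hnonneg (n - 6)]
end
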